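/- Ostrowski–Reich theorem (Gauss–Seidel direction): if A is a Hermitian positive definite n×n complex matrix with decomposition A = D + L + L^H, where D is the diagonal part and L the strictly lower triangular part, then the spectral radius of the Gauss–Seidel iteration matrix G = -(D+L)^{-1}L^H is strictly less than 1. -/

import Mathlib

open Matrix
open scoped ComplexOrder

lemma conj_quad {n : ℕ} (M : Matrix (Fin n) (Fin n) ℂ) (x : Fin n → ℂ) :
    star x ⬝ᵥ (Mᴴ *ᵥ x) = star (star x ⬝ᵥ (M *ᵥ x)) := by
  simp only [dotProduct, mulVec, conjTranspose_apply, star_sum, star_mul', star_star,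
    Pi.star_apply, Finset.mul_sum]
  rw [Finset.sum_comm]
  exact Finset.sum_congr rfl fun i _ => Finset.sum_congr rfl fun j _ => by ring

/-- Ostrowski–Reich theorem (Gauss–Seidel direction): if `A` is Hermitian
positive definite with `A = D + L + Lᴴ`, then the Gauss–Seidel iteration
matrix `G = -(D+L)⁻¹ Lᴴ` has spectral radius strictly less than `1`. -/
theorem stmt_10 (n : ℕ) (A : Matrix (Fin n) (Fin n) ℂ)
    (hA : A.PosDef)
    (D L G : Matrix (Fin n) (Fin n) ℂ)
    (hD : D = Matrix.diagonal (fun i => A i i))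
    (hL : L = Matrix.of (fun i j : Fin n => if (j : ℕ) < (i : ℕ) then A i j else 0))
    (hdec : A = D + L + Lᴴ)
    (hG : G = -((D + L)⁻¹ * Lᴴ)) :
    ∀ μ ∈ spectrum ℂ G, ‖μ‖ < 1 := by
  -- diagonal entries of A are positive
  have hdiag : ∀ i, (0 : ℂ) < A i i := by
    intro i
    have hs : (Pi.single i 1 : Fin n → ℂ) ≠ 0 := by
      intro h
      simpa using congrFun h i
    have hst : star (Pi.single i 1 : Fin n → ℂ) = Pi.single i 1 := by
      funext j
      by_cases h : j = i <;> simp [Pi.single_apply, h]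
    have := hA.dotProduct_mulVec_pos hs
    simpa [hst, mulVec_single, single_dotProduct] using this
  -- D + L is lower triangular with nonzero diagonal, hence invertible
  have hMii : ∀ i, (D + L) i i = A i i := by
    intro i
    simp [hD, hL, diagonal_apply_eq]
  have hMdet : IsUnit (D + L).det := by
    have htri : (D + L).BlockTriangular OrderDual.toDual := by
      intro i j hij
      have hij' : (i : ℕ) < (j : ℕ) := hij
      have hne : i ≠ j := fun h => by omega
      have hnlt : ¬ ((j : ℕ) < (i : ℕ)) := by omega
      simp only [hD, hL, Matrix.add_apply, diagonal_apply_ne _ hne, Matrix.of_apply,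
        if_neg hnlt, add_zero, zero_add]
    rw [isUnit_iff_ne_zero, det_of_lowerTriangular _ htri]
    refine Finset.prod_ne_zero_iff.mpr fun i _ => ?_
    rw [hMii]
    exact ne_of_gt (hdiag i)
  have hMG : (D + L) * G = -Lᴴ := by
    rw [hG, Matrix.mul_neg, ← Matrix.mul_assoc, Matrix.mul_nonsing_inv _ hMdet, Matrix.one_mul]
  -- D is positive definite
  have hDpos : D.PosDef := by
    rw [hD]; exact Matrix.PosDef.diagonal hdiag
  intro μ hμ
  rw [spectrum.mem_iff] at hμ
  have hdet0 : ((algebraMap ℂ (Matrix (Fin n) (Fin n) ℂ)) μ - G).det = 0 := by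
    by_contra h
    exact hμ ((Matrix.isUnit_iff_isUnit_det _).mpr (isUnit_iff_ne_zero.mpr h))
  obtain ⟨x, hx0, hx⟩ := (Matrix.exists_mulVec_eq_zero_iff).mpr hdet0
  have hGx : G *ᵥ x = μ • x := by
    have h1 : ((algebraMap ℂ (Matrix (Fin n) (Fin n) ℂ)) μ - G) *ᵥ x
        = μ • x - G *ᵥ x := by
      rw [Matrix.sub_mulVec]
      congr 1
      rw [Algebra.algebraMap_eq_smul_one, Matrix.smul_mulVec, Matrix.one_mulVec]
    rw [h1] at hx
    exact (sub_eq_zero.mp hx).symm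
  -- key vector identity: μ • ((D+L) *ᵥ x) = -(Lᴴ *ᵥ x)
  have key1 : μ • ((D + L) *ᵥ x) = -(Lᴴ *ᵥ x) := by
    calc μ • ((D + L) *ᵥ x) = (D + L) *ᵥ (μ • x) := by
          rw [Matrix.mulVec_smul]
      _ = (D + L) *ᵥ (G *ᵥ x) := by rw [hGx]
      _ = ((D + L) * G) *ᵥ x := by rw [Matrix.mulVec_mulVec]
      _ = -(Lᴴ *ᵥ x) := by rw [hMG, Matrix.neg_mulVec]
  set s : ℂ := star x ⬝ᵥ ((D + L) *ᵥ x) with hs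
  set a : ℂ := star x ⬝ᵥ (A *ᵥ x) with ha
  set d : ℂ := star x ⬝ᵥ (D *ᵥ x) with hd
  have hapos : 0 < a := hA.dotProduct_mulVec_pos hx0
  have hdpos : 0 < d := hDpos.dotProduct_mulVec_pos hx0
  have haim : a.im = 0 := (Complex.lt_def.mp hapos).2.symm
  have hare : 0 < a.re := (Complex.lt_def.mp hapos).1
  have hdim : d.im = 0 := (Complex.lt_def.mp hdpos).2.symm
  have hdre : 0 < d.re := (Complex.lt_def.mp hdpos).1
  -- h1 : (1 - μ) * s = a
  have h1 : (1 - μ) * s = a := by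
    have hAx : A *ᵥ x = (1 - μ) • ((D + L) *ᵥ x) := by
      have : A *ᵥ x = (D + L) *ᵥ x + Lᴴ *ᵥ x := by
        rw [hdec, add_assoc, ← add_assoc]
        rw [Matrix.add_mulVec]
      rw [this, sub_smul, one_smul, key1]
      abel
    rw [ha, hAx, dotProduct_smul, smul_eq_mul]
  -- conjugate equation
  have hMH : (D + L)ᴴ = D + Lᴴ := by
    have hstar : (star fun i => A i i : Fin n → ℂ) = fun i => A i i := by
      funext i
      simpa [conjTranspose_apply] using congrFun (congrFun hA.1 i) i
    rw [conjTranspose_add, hD, diagonal_conjTranspose, hstar]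
  have h2 : s + star s = a + d := by
    have hsum : s + star s = star x ⬝ᵥ (((D + L) + (D + L)ᴴ) *ᵥ x) := by
      rw [Matrix.add_mulVec, dotProduct_add, conj_quad]
    have hmats : (D + L) + (D + L)ᴴ = A + D := by
      rw [hMH, hdec]; abel
    rw [hsum, hmats, Matrix.add_mulVec, dotProduct_add]
  -- conjugates
  have hstar_a : star a = a := by
    rw [Complex.star_def, Complex.conj_eq_iff_im]; exact haim
  have h1' : (1 - star μ) * star s = a := by
    have h := congrArg star h1
    rwa [star_mul', star_sub, star_one, hstar_a] at h
  have hμ1 : μ ≠ 1 := by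
    intro h
    rw [h, sub_self, zero_mul] at h1
    rw [← h1] at hare
    simp at hare
  have key : a * ((1 - μ) + (1 - star μ)) = (a + d) * ((1 - μ) * (1 - star μ)) := by
    linear_combination (-(1 - star μ)) * h1 + (-(1 - μ)) * h1' + (1 - μ) * (1 - star μ) * h2
  have hre := congrArg Complex.re key
  simp only [Complex.star_def, Complex.add_re, Complex.add_im, Complex.mul_re, Complex.mul_im,
    Complex.sub_re, Complex.sub_im, Complex.one_re, Complex.one_im, Complex.conj_re,
    Complex.conj_im, haim, hdim] at hre
  have hpos : 0 < (1 - μ.re) ^ 2 + μ.im ^ 2 := by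
    have hor : μ.re ≠ 1 ∨ μ.im ≠ 0 := by
      by_contra h
      push_neg at h
      exact hμ1 (Complex.ext h.1 h.2)
    rcases hor with h | h
    · have : (1 - μ.re) ≠ 0 := sub_ne_zero.mpr (Ne.symm h)
      exact add_pos_of_pos_of_nonneg (pow_two_pos_of_ne_zero this) (sq_nonneg _)
    · exact add_pos_of_nonneg_of_pos (sq_nonneg _) (pow_two_pos_of_ne_zero h)
  have hn : ‖μ‖ ^ 2 = μ.re * μ.re + μ.im * μ.im := by
    rw [Complex.sq_norm, Complex.normSq_apply]
  have hq : a.re * (2 - 2 * μ.re) = (a.re + d.re) * ((1 - μ.re) ^ 2 + μ.im ^ 2) := by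
    linear_combination hre
  have h3 : μ.re ^ 2 + μ.im ^ 2 < 1 := by
    nlinarith [mul_pos hdre hpos, hare, hq]
  have h4 : ‖μ‖ ^ 2 < 1 := by rw [hn]; nlinarith [h3]
  nlinarith [norm_nonneg μ, h4]
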